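/- arXiv:1702.05261 — 14 statements merged into one kernel-verified Lean document; each statement's English description precedes it below -/
import Mathlib

section
/- Let R be a ring with identity and e an idempotent in R. Then e is Peirce trivial (i.e., eR(1-e)Re = 0 and (1-e)ReR(1-e) = 0) if and only if the additive subgroup I = eR(1-e) + (1-e)Re is a two-sided ideal of R. -/
/-- An idempotent `e` in a ring `R` with identity is Peirce trivial
(`eR(1-e)Re = 0` and `(1-e)ReR(1-e) = 0`) iff the additive subgroup
`I = eR(1-e) + (1-e)Re` is a two-sided ideal of `R`. -/
theorem peirce_trivial_iff_ideal {R : Type*} [Ring R] (e : R) (he : e * e = e) :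
    ((∀ r s : R, e * r * (1 - e) * s * e = 0) ∧
      (∀ r s : R, (1 - e) * r * e * s * (1 - e) = 0)) ↔
    (∀ x ∈ {x : R | ∃ r s : R, x = e * r * (1 - e) + (1 - e) * s * e}, ∀ a : R,
      a * x ∈ {x : R | ∃ r s : R, x = e * r * (1 - e) + (1 - e) * s * e} ∧
      x * a ∈ {x : R | ∃ r s : R, x = e * r * (1 - e) + (1 - e) * s * e}) := by
  constructor
  · rintro ⟨hin, hout⟩ x ⟨A, B, rfl⟩ a
    constructor
    · refine ⟨a * e * A, a * (1 - e) * B, ?_⟩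
      have h1 := hout a A
      have h2 := hin a B
      have key : a * (e * A * (1 - e) + (1 - e) * B * e)
          = e * (a * e * A) * (1 - e) + (1 - e) * (a * (1 - e) * B) * e
            + ((1 - e) * a * e * A * (1 - e) + e * a * (1 - e) * B * e) := by
        noncomm_ring
      rw [key, h1, h2]; simp
    · refine ⟨A * (1 - e) * a, B * e * a, ?_⟩
      have h1 := hin A a
      have h2 := hout B a
      have key : (e * A * (1 - e) + (1 - e) * B * e) * a
          = e * (A * (1 - e) * a) * (1 - e) + (1 - e) * (B * e * a) * e
            + (e * A * (1 - e) * a * e + (1 - e) * B * e * a * (1 - e)) := by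
        noncomm_ring
      rw [key, h1, h2]; simp
  · intro H
    have h1 : e * (1 - e) = 0 := by rw [mul_sub, mul_one, he, sub_self]
    have h2 : (1 - e) * e = 0 := by rw [sub_mul, one_mul, he, sub_self]
    constructor
    · intro r s
      obtain ⟨A, B, hAB⟩ := (H (e * r * (1 - e)) ⟨r, 0, by noncomm_ring⟩ s).2
      have : e * (e * r * (1 - e) * s) * e = e * (e * A * (1 - e) + (1 - e) * B * e) * e := by
        rw [hAB]
      calc e * r * (1 - e) * s * e = e * (e * r * (1 - e) * s) * e := by
            rw [← mul_assoc, ← mul_assoc, ← mul_assoc, he]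
        _ = e * (e * A * (1 - e) + (1 - e) * B * e) * e := this
        _ = 0 := by
            rw [mul_add, add_mul]
            rw [show e * (e * A * (1 - e)) * e = e * e * A * ((1 - e) * e) by noncomm_ring,
              h2, mul_zero,
              show e * ((1 - e) * B * e) * e = (e * (1 - e)) * B * (e * e) by noncomm_ring,
              h1, zero_mul, zero_mul, add_zero]
    · intro r s
      obtain ⟨A, B, hAB⟩ := (H ((1 - e) * r * e) ⟨0, r, by noncomm_ring⟩ s).2
      have : (1 - e) * ((1 - e) * r * e * s) * (1 - e)
          = (1 - e) * (e * A * (1 - e) + (1 - e) * B * e) * (1 - e) := by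
        rw [hAB]
      have h3 : (1 - e) * (1 - e) = 1 - e := by
        rw [sub_mul, one_mul, mul_sub, mul_one, he]; abel
      calc (1 - e) * r * e * s * (1 - e)
            = (1 - e) * ((1 - e) * r * e * s) * (1 - e) := by
            rw [← mul_assoc, ← mul_assoc, ← mul_assoc, h3]
        _ = (1 - e) * (e * A * (1 - e) + (1 - e) * B * e) * (1 - e) := this
        _ = 0 := by
            rw [mul_add, add_mul]
            rw [show (1 - e) * (e * A * (1 - e)) * (1 - e)
                = ((1 - e) * e) * A * ((1 - e) * (1 - e)) by noncomm_ring,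
              h2, zero_mul, zero_mul,
              show (1 - e) * ((1 - e) * B * e) * (1 - e)
                = (1 - e) * (1 - e) * B * (e * (1 - e)) by noncomm_ring,
              h1, mul_zero, add_zero]
end

section
/- Let R be a ring with identity and e a Peirce trivial idempotent. Then the ideal generated by the set eR(1-e) ∪ (1-e)Re has square zero; in particular (R e R (1-e) R)² = 0 and (R (1-e) R e R)² = 0. -/
section Aux

variable {R : Type*} [Ring R] (e : R)

private lemma ptisz_gen_mul (h1 : ∀ r s : R, e * r * (1 - e) * s * e = 0)
    (h2 : ∀ r s : R, (1 - e) * r * e * s * (1 - e) = 0)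
    (g : R)
    (hg : g ∈ ({y : R | ∃ r : R, y = e * r * (1 - e)} ∪
      {y : R | ∃ r : R, y = (1 - e) * r * e}))
    (r : R)
    (h : R)
    (hh : h ∈ ({y : R | ∃ r : R, y = e * r * (1 - e)} ∪
      {y : R | ∃ r : R, y = (1 - e) * r * e})) :
    g * r * h = 0 := by
  rcases hg with ⟨a, rfl⟩ | ⟨a, rfl⟩ <;> rcases hh with ⟨b, rfl⟩ | ⟨b, rfl⟩
  · have key := h2 r b
    calc e * a * (1 - e) * r * (e * b * (1 - e))
        = e * a * ((1 - e) * r * e * b * (1 - e)) := by noncomm_ring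
      _ = 0 := by rw [key, mul_zero]
  · have key := h1 a (r * (1 - e) * b)
    calc e * a * (1 - e) * r * ((1 - e) * b * e)
        = e * a * (1 - e) * (r * (1 - e) * b) * e := by noncomm_ring
      _ = 0 := key
  · have key := h2 a (r * e * b)
    calc (1 - e) * a * e * r * (e * b * (1 - e))
        = (1 - e) * a * e * (r * e * b) * (1 - e) := by noncomm_ring
      _ = 0 := key
  · have key := h1 r b
    calc (1 - e) * a * e * r * ((1 - e) * b * e)
        = (1 - e) * a * (e * r * (1 - e) * b * e) := by noncomm_ring
      _ = 0 := by rw [key, mul_zero]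

private lemma ptisz_gen_span (h1 : ∀ r s : R, e * r * (1 - e) * s * e = 0)
    (h2 : ∀ r s : R, (1 - e) * r * e * s * (1 - e) = 0)
    (g : R)
    (hg : g ∈ ({y : R | ∃ r : R, y = e * r * (1 - e)} ∪
      {y : R | ∃ r : R, y = (1 - e) * r * e}))
    (z : R)
    (hz : z ∈ TwoSidedIdeal.span
        ({y : R | ∃ r : R, y = e * r * (1 - e)} ∪ {y : R | ∃ r : R, y = (1 - e) * r * e})) :
    g * z = 0 := by
  set S := ({y : R | ∃ r : R, y = e * r * (1 - e)} ∪
      {y : R | ∃ r : R, y = (1 - e) * r * e}) with hS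
  let I : TwoSidedIdeal R := TwoSidedIdeal.mk' {z : R | ∀ r : R, g * r * z = 0}
    (fun r => by simp)
    (fun {x y} hx hy r => by rw [mul_add, hx r, hy r, add_zero])
    (fun {x} hx r => by rw [mul_neg, hx r, neg_zero])
    (fun {x y} hy r => by rw [show g * r * (x * y) = g * (r * x) * y by noncomm_ring, hy])
    (fun {x y} hx r => by rw [show g * r * (x * y) = (g * r * x) * y by noncomm_ring, hx, zero_mul])
  have hmem : ∀ w, w ∈ I ↔ ∀ r : R, g * r * w = 0 := fun w =>
    TwoSidedIdeal.mem_mk' _ _ _ _ _ _ w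
  have hzI : z ∈ I := by
    refine TwoSidedIdeal.mem_span_iff.mp hz I ?_
    intro h hh
    exact (hmem h).mpr fun r => ptisz_gen_mul e h1 h2 g hg r h hh
  simpa using (hmem z).mp hzI 1

end Aux

/-- If `e` is a Peirce trivial idempotent of a ring `R` with identity,
then the two-sided ideal generated by `eR(1-e) ∪ (1-e)Re` has square zero; in
particular `(ReR(1-e)R)² = 0` and `(R(1-e)ReR)² = 0`. -/
theorem peirce_trivial_ideal_sq_zero {R : Type*} [Ring R] (e : R) (he : e * e = e)
    (h1 : ∀ r s : R, e * r * (1 - e) * s * e = 0)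
    (h2 : ∀ r s : R, (1 - e) * r * e * s * (1 - e) = 0) :
    (∀ x ∈ TwoSidedIdeal.span
        ({y : R | ∃ r : R, y = e * r * (1 - e)} ∪ {y : R | ∃ r : R, y = (1 - e) * r * e}),
      ∀ z ∈ TwoSidedIdeal.span
        ({y : R | ∃ r : R, y = e * r * (1 - e)} ∪ {y : R | ∃ r : R, y = (1 - e) * r * e}),
      x * z = 0) ∧
    (∀ r₁ r₂ r₃ s₁ s₂ s₃ : R,
      (r₁ * e * r₂ * (1 - e) * r₃) * (s₁ * e * s₂ * (1 - e) * s₃) = 0) ∧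
    (∀ r₁ r₂ r₃ s₁ s₂ s₃ : R,
      (r₁ * (1 - e) * r₂ * e * r₃) * (s₁ * (1 - e) * s₂ * e * s₃) = 0) := by
  refine ⟨?_, ?_, ?_⟩
  · intro x hx z hz
    set S := ({y : R | ∃ r : R, y = e * r * (1 - e)} ∪
        {y : R | ∃ r : R, y = (1 - e) * r * e}) with hS
    let I : TwoSidedIdeal R := TwoSidedIdeal.mk'
      {x : R | ∀ z ∈ TwoSidedIdeal.span S, x * z = 0}
      (fun z _ => by simp)
      (fun {a b} ha hb z hz => by rw [add_mul, ha z hz, hb z hz, add_zero])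
      (fun {a} ha z hz => by rw [neg_mul, ha z hz, neg_zero])
      (fun {r a} ha z hz => by rw [mul_assoc, ha z hz, mul_zero])
      (fun {a r} ha z hz => by
        rw [mul_assoc]
        exact ha (r * z) ((TwoSidedIdeal.span S).mul_mem_left r z hz))
    have hmem : ∀ w, w ∈ I ↔ ∀ z ∈ TwoSidedIdeal.span S, w * z = 0 := fun w =>
      TwoSidedIdeal.mem_mk' _ _ _ _ _ _ w
    have hxI : x ∈ I := by
      refine TwoSidedIdeal.mem_span_iff.mp hx I ?_
      intro g hg
      exact (hmem g).mpr fun z hz => ptisz_gen_span e h1 h2 g hg z hz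
    exact (hmem x).mp hxI z hz
  · intro r₁ r₂ r₃ s₁ s₂ s₃
    have key := h2 (r₃ * s₁) s₂
    calc (r₁ * e * r₂ * (1 - e) * r₃) * (s₁ * e * s₂ * (1 - e) * s₃)
        = r₁ * e * r₂ * ((1 - e) * (r₃ * s₁) * e * s₂ * (1 - e)) * s₃ := by noncomm_ring
      _ = 0 := by rw [key, mul_zero, zero_mul]
  · intro r₁ r₂ r₃ s₁ s₂ s₃
    have key := h1 (r₃ * s₁) s₂
    calc (r₁ * (1 - e) * r₂ * e * r₃) * (s₁ * (1 - e) * s₂ * e * s₃)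
        = r₁ * (1 - e) * r₂ * (e * (r₃ * s₁) * (1 - e) * s₂ * e) * s₃ := by noncomm_ring
      _ = 0 := by rw [key, mul_zero, zero_mul]
end

section
/- Let R be a semiprime ring with identity and e a Peirce trivial idempotent. Then e is central, and consequently R is isomorphic to the direct product of the rings eRe and (1-e)R(1-e). -/
/-- In a semiprime ring `R` with identity, every Peirce trivial
idempotent `e` is central; consequently `R` is isomorphic to the direct product
of the rings `eRe` and `(1-e)R(1-e)`.  The isomorphism is expressed by the map
`x ↦ (e*x*e, (1-e)*x*(1-e))`, which is additive, multiplicative componentwise,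
injective, and surjective onto the product of the two corners. -/
theorem semiprime_peirce_trivial_central {R : Type*} [Ring R]
    (hsp : ∀ a : R, (∀ r : R, a * r * a = 0) → a = 0)
    (e : R) (he : e * e = e)
    (h1 : ∀ r s : R, e * r * (1 - e) * s * e = 0)
    (h2 : ∀ r s : R, (1 - e) * r * e * s * (1 - e) = 0) :
    (∀ r : R, e * r = r * e) ∧
    (∀ x y : R, e * (x + y) * e = e * x * e + e * y * e ∧
      (1 - e) * (x + y) * (1 - e) = (1 - e) * x * (1 - e) + (1 - e) * y * (1 - e)) ∧
    (∀ x y : R, e * (x * y) * e = (e * x * e) * (e * y * e) ∧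
      (1 - e) * (x * y) * (1 - e) = ((1 - e) * x * (1 - e)) * ((1 - e) * y * (1 - e))) ∧
    (∀ x y : R, e * x * e = e * y * e → (1 - e) * x * (1 - e) = (1 - e) * y * (1 - e) → x = y) ∧
    (∀ a b : R, ∃ x : R,
      e * x * e = e * a * e ∧ (1 - e) * x * (1 - e) = (1 - e) * b * (1 - e)) := by
  -- e * r * (1 - e) = 0 for all r
  have k1 : ∀ r : R, e * r * (1 - e) = 0 := by
    intro r
    apply hsp
    intro s
    have : e * r * (1 - e) * s * (e * r * (1 - e)) =
        e * r * (1 - e) * s * e * (r * (1 - e)) := by noncomm_ring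
    rw [this, h1, zero_mul]
  have k2 : ∀ r : R, (1 - e) * r * e = 0 := by
    intro r
    apply hsp
    intro s
    have : (1 - e) * r * e * s * ((1 - e) * r * e) =
        (1 - e) * r * e * s * (1 - e) * (r * e) := by noncomm_ring
    rw [this, h2, zero_mul]
  have hc : ∀ r : R, e * r = r * e := by
    intro r
    have a1 := k1 r
    have a2 := k2 r
    have b1 : e * r - e * r * e = 0 := by
      have : e * r * (1 - e) = e * r - e * r * e := by noncomm_ring
      rw [← this, a1]
    have b2 : r * e - e * (r * e) = 0 := by
      have : (1 - e) * r * e = r * e - e * (r * e) := by noncomm_ring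
      rw [← this, a2]
    have c1 : e * r = e * r * e := sub_eq_zero.mp b1
    have c2 : r * e = e * (r * e) := sub_eq_zero.mp b2
    rw [c1, c2, mul_assoc]
  have hxe : ∀ x : R, e * x * e = x * e := by
    intro x
    rw [hc x, mul_assoc, he]
  have he' : (1 - e) * (1 - e) = 1 - e := by noncomm_ring [he]
  have hc' : ∀ r : R, (1 - e) * r = r * (1 - e) := by
    intro r; rw [sub_mul, mul_sub, one_mul, mul_one, hc]
  have hxe' : ∀ x : R, (1 - e) * x * (1 - e) = x * (1 - e) := by
    intro x
    rw [hc' x, mul_assoc, he']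
  refine ⟨hc, ?_, ?_, ?_, ?_⟩
  · intro x y
    constructor <;> noncomm_ring
  · intro x y
    constructor
    · rw [hxe, hxe, hxe, mul_assoc, mul_assoc x e, ← mul_assoc e y, hxe]
    · rw [hxe', hxe', hxe', mul_assoc, mul_assoc x (1-e), ← mul_assoc (1-e) y, hxe']
  · intro x y hx hy
    rw [hxe, hxe] at hx
    rw [hxe', hxe'] at hy
    have : x * e + x * (1 - e) = y * e + y * (1 - e) := by rw [hx, hy]
    calc x = x * e + x * (1 - e) := by noncomm_ring
    _ = y * e + y * (1 - e) := this
    _ = y := by noncomm_ring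
  · intro a b
    refine ⟨a * e + b * (1 - e), ?_, ?_⟩
    · have hz : (1 - e) * e = 0 := by noncomm_ring [he]
      rw [hxe, hxe, add_mul, mul_assoc a, he, mul_assoc b, hz, mul_zero, add_zero]
    · have hz : e * (1 - e) = 0 := by noncomm_ring [he]
      rw [hxe', hxe', add_mul, mul_assoc b, he', mul_assoc a, hz, mul_zero, zero_add]
end

section
/- Let R be a ring with identity, e a Peirce trivial idempotent, m ∈ eR(1-e), n ∈ (1-e)Re, and f = e + m + n. Then the map φ : eRe → fRf sending a ↦ a + am + na is a ring isomorphism from eRe onto fRf (both corners regarded as rings with identities e and f respectively). -/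
/-- With `e` Peirce trivial, `m ∈ eR(1-e)`, `n ∈ (1-e)Re` and
`f = e + m + n`, the map `φ : eRe → fRf`, `a ↦ a + a*m + n*a`, is a ring
isomorphism of the corner rings (identities `e` and `f`): it lands in `fRf`,
is additive, multiplicative, sends `e` to `f`, and is injective and surjective
onto `fRf`. -/
theorem peirce_trivial_corner_iso {R : Type*} [Ring R]
    (e : R) (he : e * e = e)
    (h1 : ∀ r s : R, e * r * (1 - e) * s * e = 0)
    (h2 : ∀ r s : R, (1 - e) * r * e * s * (1 - e) = 0)
    (m n f : R) (hm : m = e * m * (1 - e)) (hn : n = (1 - e) * n * e)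
    (hf : f = e + m + n) :
    (∀ a : R, e * a * e = a → f * (a + a * m + n * a) * f = a + a * m + n * a) ∧
    (∀ a b : R, (a + b) + (a + b) * m + n * (a + b) = (a + a * m + n * a) + (b + b * m + n * b)) ∧
    (∀ a b : R, e * a * e = a → e * b * e = b →
      (a * b) + (a * b) * m + n * (a * b) = (a + a * m + n * a) * (b + b * m + n * b)) ∧
    (e + e * m + n * e = f) ∧
    (∀ a b : R, e * a * e = a → e * b * e = b →
      a + a * m + n * a = b + b * m + n * b → a = b) ∧
    (∀ c : R, f * c * f = c → ∃ a : R, e * a * e = a ∧ a + a * m + n * a = c) := by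
  have hem : e * m = m := by
    conv_lhs => rw [hm]
    calc e * (e * m * (1-e)) = (e*e) * m * (1-e) := by noncomm_ring
    _ = e * m * (1-e) := by rw [he]
    _ = m := hm.symm
  have hme : m * e = 0 := by
    conv_lhs => rw [hm]
    calc e * m * (1-e) * e = e*m*(e - e*e) := by noncomm_ring
    _ = 0 := by rw [he]; noncomm_ring
  have hne : n * e = n := by
    conv_lhs => rw [hn]
    calc (1-e) * n * e * e = (1-e) * n * (e*e) := by noncomm_ring
    _ = (1-e) * n * e := by rw [he]
    _ = n := hn.symm
  have hen : e * n = 0 := by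
    conv_lhs => rw [hn]
    calc e * ((1-e) * n * e) = (e - e*e) * n * e := by noncomm_ring
    _ = 0 := by rw [he]; noncomm_ring
  have hmxe : ∀ x : R, m * x * e = 0 := fun x => by
    conv_lhs => rw [hm]
    exact h1 m x
  have hexn : ∀ x : R, e * x * n = 0 := fun x => by
    conv_lhs => rw [hn]
    calc e * x * ((1-e) * n * e) = e * x * (1-e) * n * e := by noncomm_ring
    _ = 0 := h1 x n
  have hnxm : ∀ x : R, n * x * m = 0 := fun x => by
    conv_lhs => rw [hn, hm]
    calc (1-e)*n*e * x * (e*m*(1-e)) = (1-e)*n*e*(x*e*m)*(1-e) := by noncomm_ring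
    _ = 0 := h2 n (x*e*m)
  have hmxm : ∀ x : R, m * x * m = 0 := fun x => by
    calc m * x * m = m * x * (e * m * (1-e)) := by rw [← hm]
    _ = (m * x * e) * m * (1-e) := by noncomm_ring
    _ = 0 := by rw [hmxe]; noncomm_ring
  have hnxn : ∀ x : R, n * x * n = 0 := fun x => by
    calc n * x * n = ((1-e)*n*e) * x * n := by rw [← hn]
    _ = (1-e) * n * (e * x * n) := by noncomm_ring
    _ = 0 := by rw [hexn]; noncomm_ring
  have hmm : m * m = 0 := by
    calc m * m = m * (e * m) := by rw [hem]
    _ = (m * e) * m := by rw [mul_assoc]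
    _ = 0 := by rw [hme, zero_mul]
  have hnn : n * n = 0 := by
    calc n * n = n * e * n := by rw [hne]
    _ = 0 := hnxn e
  have hmn : m * n = 0 := by
    calc m * n = m * (n * e) := by rw [hne]
    _ = (m * n) * e := by rw [mul_assoc]
    _ = 0 := hmxe n
  have hnm : n * m = 0 := by
    calc n * m = n * (e * m) := by rw [hem]
    _ = n * e * m := by rw [mul_assoc]
    _ = 0 := hnxm e
  -- right-assoc variants for simp
  have V1 : ∀ x : R, e * (e * x) = e * x := fun x => by rw [← mul_assoc, he]
  have V2 : ∀ x : R, m * (e * x) = 0 := fun x => by rw [← mul_assoc, hme, zero_mul]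
  have V3 : ∀ x : R, e * (n * x) = 0 := fun x => by rw [← mul_assoc, hen, zero_mul]
  have V4 : ∀ x : R, e * (m * x) = m * x := fun x => by rw [← mul_assoc, hem]
  have V5 : ∀ x : R, n * (e * x) = n * x := fun x => by rw [← mul_assoc, hne]
  have V6 : ∀ x : R, m * (m * x) = 0 := fun x => by rw [← mul_assoc, hmm, zero_mul]
  have V7 : ∀ x : R, n * (n * x) = 0 := fun x => by rw [← mul_assoc, hnn, zero_mul]
  have V8 : ∀ x : R, m * (n * x) = 0 := fun x => by rw [← mul_assoc, hmn, zero_mul]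
  have V9 : ∀ x : R, n * (m * x) = 0 := fun x => by rw [← mul_assoc, hnm, zero_mul]
  have W1 : ∀ x : R, m * (x * e) = 0 := fun x => by rw [← mul_assoc, hmxe]
  have W1' : ∀ x y : R, m * (x * (e * y)) = 0 := fun x y => by
    rw [show x * (e*y) = (x*e)*y by rw [mul_assoc], ← mul_assoc, ← mul_assoc, hmxe, zero_mul]
  have W2 : ∀ x : R, e * (x * n) = 0 := fun x => by rw [← mul_assoc, hexn]
  have W2' : ∀ x y : R, e * (x * (n * y)) = 0 := fun x y => by
    rw [show x * (n*y) = (x*n)*y by rw [mul_assoc], ← mul_assoc, ← mul_assoc, hexn, zero_mul]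
  have W3 : ∀ x : R, n * (x * m) = 0 := fun x => by rw [← mul_assoc, hnxm]
  have W3' : ∀ x y : R, n * (x * (m * y)) = 0 := fun x y => by
    rw [show x * (m*y) = (x*m)*y by rw [mul_assoc], ← mul_assoc, ← mul_assoc, hnxm, zero_mul]
  have W3'' : ∀ x y : R, n * (x * (y * m)) = 0 := fun x y => by
    rw [show x * (y*m) = (x*y)*m by rw [mul_assoc], ← mul_assoc, hnxm]
  have W4 : ∀ x : R, m * (x * m) = 0 := fun x => by rw [← mul_assoc, hmxm]
  have W4' : ∀ x y : R, m * (x * (m * y)) = 0 := fun x y => by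
    rw [show x * (m*y) = (x*m)*y by rw [mul_assoc], ← mul_assoc, ← mul_assoc, hmxm, zero_mul]
  have W5 : ∀ x : R, n * (x * n) = 0 := fun x => by rw [← mul_assoc, hnxn]
  have W5' : ∀ x y : R, n * (x * (n * y)) = 0 := fun x y => by
    rw [show x * (n*y) = (x*n)*y by rw [mul_assoc], ← mul_assoc, ← mul_assoc, hnxn, zero_mul]
  -- facts about corner elements
  have cornerE : ∀ a : R, e * a * e = a → e * a = a := fun a haa => by
    conv_lhs => rw [← haa]
    calc e * (e * a * e) = (e*e) * a * e := by noncomm_ring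
    _ = a := by rw [he, haa]
  have cornerE' : ∀ a : R, e * a * e = a → a * e = a := fun a haa => by
    conv_lhs => rw [← haa]
    calc (e * a * e) * e = e * a * (e*e) := by noncomm_ring
    _ = a := by rw [he, haa]
  have cornerM : ∀ a : R, e * a * e = a → m * a = 0 := fun a haa => by
    conv_lhs => rw [← haa]
    calc m * (e * a * e) = (m * e) * a * e := by noncomm_ring
    _ = 0 := by rw [hme]; noncomm_ring
  have cornerN : ∀ a : R, e * a * e = a → a * n = 0 := fun a haa => by
    conv_lhs => rw [← haa]
    calc (e * a * e) * n = e * a * (e * n) := by noncomm_ring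
    _ = 0 := by rw [hen]; noncomm_ring
  refine ⟨?_, ?_, ?_, ?_, ?_, ?_⟩
  · -- lands in fRf
    intro a haa
    have hea := cornerE a haa
    have hae := cornerE' a haa
    have hma := cornerM a haa
    have han := cornerN a haa
    have U1 : ∀ x : R, e * (a * x) = a * x := fun x => by rw [← mul_assoc, hea]
    have U2 : ∀ x : R, a * (e * x) = a * x := fun x => by rw [← mul_assoc, hae]
    have U3 : ∀ x : R, m * (a * x) = 0 := fun x => by rw [← mul_assoc, hma, zero_mul]
    have U4 : ∀ x : R, a * (n * x) = 0 := fun x => by rw [← mul_assoc, han, zero_mul]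
    subst hf
    simp only [mul_add, add_mul, mul_assoc, he, hem, hme, hne, hen, hea, hae, hma, han,
      hmm, hnn, hmn, hnm, V1, V2, V3, V4, V5, V6, V7, V8, V9,
      W1, W1', W2, W2', W3, W3', W3'', W4, W4', W5, W5', U1, U2, U3, U4,
      zero_mul, mul_zero, add_zero, zero_add]
    abel
  · -- additive
    intro a b
    noncomm_ring
  · -- multiplicative
    intro a b haa hbb
    have hea := cornerE a haa
    have hae := cornerE' a haa
    have hma := cornerM a haa
    have han := cornerN a haa
    have heb := cornerE b hbb
    have hbe := cornerE' b hbb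
    have hmb := cornerM b hbb
    have hbn := cornerN b hbb
    have U1 : ∀ x : R, e * (a * x) = a * x := fun x => by rw [← mul_assoc, hea]
    have U2 : ∀ x : R, a * (e * x) = a * x := fun x => by rw [← mul_assoc, hae]
    have U3 : ∀ x : R, m * (a * x) = 0 := fun x => by rw [← mul_assoc, hma, zero_mul]
    have U4 : ∀ x : R, a * (n * x) = 0 := fun x => by rw [← mul_assoc, han, zero_mul]
    have T1 : ∀ x : R, e * (b * x) = b * x := fun x => by rw [← mul_assoc, heb]
    have T2 : ∀ x : R, b * (e * x) = b * x := fun x => by rw [← mul_assoc, hbe]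
    have T3 : ∀ x : R, m * (b * x) = 0 := fun x => by rw [← mul_assoc, hmb, zero_mul]
    have T4 : ∀ x : R, b * (n * x) = 0 := fun x => by rw [← mul_assoc, hbn, zero_mul]
    simp only [mul_add, add_mul, mul_assoc, he, hem, hme, hne, hen, hea, hae, hma, han,
      heb, hbe, hmb, hbn, hmm, hnn, hmn, hnm, V1, V2, V3, V4, V5, V6, V7, V8, V9,
      W1, W1', W2, W2', W3, W3', W3'', W4, W4', W5, W5', U1, U2, U3, U4, T1, T2, T3, T4,
      zero_mul, mul_zero, add_zero, zero_add]
    abel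
  · -- sends e to f
    rw [hem, hne, hf]
  · -- injective
    intro a b haa hbb h
    have h' : e * (a + a * m + n * a) * e = e * (b + b * m + n * b) * e := by rw [h]
    have ha' : e * (a + a * m + n * a) * e = a := by
      calc e * (a + a * m + n * a) * e
          = e*a*e + (e*a)*(m*e) + (e*n)*(a*e) := by noncomm_ring
      _ = a := by rw [haa, hme, hen, mul_zero, zero_mul, add_zero, add_zero]
    have hb' : e * (b + b * m + n * b) * e = b := by
      calc e * (b + b * m + n * b) * e
          = e*b*e + (e*b)*(m*e) + (e*n)*(b*e) := by noncomm_ring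
      _ = b := by rw [hbb, hme, hen, mul_zero, zero_mul, add_zero, add_zero]
    rw [ha', hb'] at h'
    exact h'
  · -- surjective
    intro c hc
    refine ⟨e * c * e, ?_, ?_⟩
    · calc e * (e * c * e) * e = (e*e) * c * (e*e) := by noncomm_ring
      _ = e * c * e := by rw [he]
    · have key : (e+m+n) * c * (e+m+n) = c := by rw [← hf]; exact hc
      have expand : (e+m+n) * c * (e+m+n)
          = e*c*e + (e*c*e)*m + n*(e*c*e)
            + (e*c*n + m*c*e + m*c*m + m*c*n + n*c*m + n*c*n) := by
        have t1 : e*c*m = (e*c*e)*m := by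
          calc e*c*m = e*c*(e*m) := by rw [hem]
          _ = (e*c*e)*m := by rw [← mul_assoc]
        have t2 : n*c*e = n*(e*c*e) := by
          calc n*c*e = (n*e)*c*e := by rw [hne]
          _ = n*(e*c*e) := by noncomm_ring
        calc (e+m+n) * c * (e+m+n)
            = e*c*e + e*c*m + n*c*e
              + (e*c*n + m*c*e + m*c*m + m*c*n + n*c*m + n*c*n) := by noncomm_ring
        _ = _ := by rw [t1, t2]
      have z1 : e*c*n = 0 := hexn c
      have z2 : m*c*e = 0 := hmxe c
      have z3 : m*c*m = 0 := hmxm c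
      have z4 : m*c*n = 0 := by
        conv_lhs => rw [hn]
        calc m*c*((1-e)*n*e) = m*(c*((1-e)*n))*e := by noncomm_ring
        _ = 0 := hmxe _
      have z5 : n*c*m = 0 := hnxm c
      have z6 : n*c*n = 0 := hnxn c
      have : e*c*e + (e*c*e)*m + n*(e*c*e) = c := by
        conv_rhs => rw [← key, expand, z1, z2, z3, z4, z5, z6]
        abel
      exact this
end

section
/- Let R be a ring with identity, e a Peirce trivial idempotent, m ∈ eR(1-e), n ∈ (1-e)Re, and f = e + m + n. Then the left R-modules Re and Rf are isomorphic. -/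
/-- With `e` Peirce trivial, `m ∈ eR(1-e)`, `n ∈ (1-e)Re` and
`f = e + m + n`, the left `R`-modules `Re` and `Rf` are isomorphic. -/
theorem peirce_trivial_modules_iso {R : Type*} [Ring R]
    (e : R) (he : e * e = e)
    (h1 : ∀ r s : R, e * r * (1 - e) * s * e = 0)
    (h2 : ∀ r s : R, (1 - e) * r * e * s * (1 - e) = 0)
    (m n f : R) (hm : m = e * m * (1 - e)) (hn : n = (1 - e) * n * e)
    (hf : f = e + m + n) :
    Nonempty ((Submodule.span R {e} : Submodule R R) ≃ₗ[R]
      (Submodule.span R {f} : Submodule R R)) := by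
  have he1 : e * (1 - e) = 0 := by rw [mul_sub, mul_one, he, sub_self]
  have h1e : (1 - e) * e = 0 := by rw [sub_mul, one_mul, he, sub_self]
  have hem : e * m = m := by
    conv_lhs => rw [hm]
    rw [← mul_assoc, ← mul_assoc, he, ← hm]
  have hme : m * e = 0 := by
    rw [hm, mul_assoc, mul_assoc, h1e, mul_zero, mul_zero]
  have hen : e * n = 0 := by
    rw [hn, ← mul_assoc, ← mul_assoc, he1, zero_mul, zero_mul]
  have hne : n * e = n := by
    conv_lhs => rw [hn]
    rw [mul_assoc, mul_assoc, he, ← mul_assoc, ← hn]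
  have hnm : n * m = 0 := by
    have h := h2 n m
    calc n * m = (1 - e) * n * e * (e * m * (1 - e)) := by rw [← hn, ← hm]
      _ = (1 - e) * n * (e * e) * m * (1 - e) := by simp only [mul_assoc]
      _ = (1 - e) * n * e * m * (1 - e) := by rw [he]
      _ = 0 := h
  have hn1e : n * (1 - e) = 0 := by
    have h := h2 n 1
    rw [mul_one, ← hn] at h
    exact h
  have hnn : n * n = 0 := by
    nth_rewrite 2 [hn]
    rw [← mul_assoc, ← mul_assoc, hn1e, zero_mul, zero_mul]
  have hef : e * f = e + m := by rw [hf, mul_add, mul_add, he, hem, hen, add_zero]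
  have hfe : f * e = e + n := by rw [hf, add_mul, add_mul, he, hme, add_zero, hne]
  have hefe : e * f * e = e := by rw [hef, add_mul, hme, add_zero, he]
  have hfef : f * e * f = f := by
    rw [hfe, add_mul, hef, hf, mul_add, mul_add, hne, hnm, hnn, add_zero, add_zero]
  refine ⟨LinearEquiv.ofLinear
    { toFun := fun x => ⟨x.1 * f, Submodule.mem_span_singleton.2 ⟨x.1, rfl⟩⟩
      map_add' := fun x y => by ext; simp [add_mul]
      map_smul' := fun r x => by ext; simp [mul_assoc] }
    { toFun := fun y => ⟨y.1 * e, Submodule.mem_span_singleton.2 ⟨y.1, rfl⟩⟩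
      map_add' := fun x y => by ext; simp [add_mul]
      map_smul' := fun r x => by ext; simp [mul_assoc] }
    ?_ ?_⟩
  · ext y
    obtain ⟨r, hr⟩ := Submodule.mem_span_singleton.1 y.2
    simp only [LinearMap.coe_comp, Function.comp_apply, LinearMap.coe_mk, AddHom.coe_mk,
      LinearMap.id_coe, id_eq]
    rw [← hr, smul_eq_mul, mul_assoc, mul_assoc, ← mul_assoc f, hfef]
  · ext x
    obtain ⟨r, hr⟩ := Submodule.mem_span_singleton.1 x.2
    simp only [LinearMap.coe_comp, Function.comp_apply, LinearMap.coe_mk, AddHom.coe_mk,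
      LinearMap.id_coe, id_eq]
    rw [← hr, smul_eq_mul, mul_assoc, mul_assoc, ← mul_assoc e, hefe]
end

section
/- Let R be a ring with identity, e a Peirce trivial idempotent, m ∈ eR(1-e), n ∈ (1-e)Re, and f = e + m + n. Then f is itself a Peirce trivial idempotent of R. -/
/-- With `e` Peirce trivial, `m ∈ eR(1-e)`, `n ∈ (1-e)Re`, the
idempotent `f = e + m + n` is itself Peirce trivial:
`fR(1-f)Rf = 0` and `(1-f)RfR(1-f) = 0`. -/
theorem peirce_trivial_of_corner {R : Type*} [Ring R]
    (e : R) (he : e * e = e)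
    (h1 : ∀ r s : R, e * r * (1 - e) * s * e = 0)
    (h2 : ∀ r s : R, (1 - e) * r * e * s * (1 - e) = 0)
    (m n f : R) (hm : m = e * m * (1 - e)) (hn : n = (1 - e) * n * e)
    (hf : f = e + m + n) :
    (∀ r s : R, f * r * (1 - f) * s * f = 0) ∧
    (∀ r s : R, (1 - f) * r * f * s * (1 - f) = 0) := by
  have hge : (1 - e) * e = 0 := by rw [sub_mul, one_mul, he, sub_self]
  have heg : e * (1 - e) = 0 := by rw [mul_sub, mul_one, he, sub_self]
  have hme : m * e = 0 := by rw [hm, mul_assoc, hge, mul_zero]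
  have hne : n * e = n := by
    conv_lhs => rw [hn]
    rw [mul_assoc, he, ← hn]
  have hen : e * n = 0 := by
    rw [hn, ← mul_assoc, ← mul_assoc, heg, zero_mul, zero_mul]
  have hem : e * m = m := by
    conv_lhs => rw [hm]
    rw [← mul_assoc, ← mul_assoc, he, ← hm]
  have hmg : m * (1 - e) = m := by rw [mul_sub, mul_one, hme, sub_zero]
  have hng : n * (1 - e) = 0 := by rw [mul_sub, mul_one, hne, sub_self]
  have hmn : m * n = 0 := by
    have h := h1 m n
    rw [← hm, mul_assoc, hne] at h
    exact h
  have hnm : n * m = 0 := by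
    have h := h2 n m
    rw [← hn, mul_assoc, hmg] at h
    exact h
  have hmm : m * m = 0 := by
    nth_rewrite 2 [hm]
    rw [← mul_assoc, ← mul_assoc, hme, zero_mul, zero_mul]
  have hnn : n * n = 0 := by
    nth_rewrite 2 [hn]
    rw [← mul_assoc, ← mul_assoc, hng, zero_mul, zero_mul]
  have huv : (1 - m + n) * (1 + m - n) = 1 := by
    have h' : (1 - m + n) * (1 + m - n) = 1 - m * m - n * n + m * n + n * m := by
      noncomm_ring
    rw [h', hmm, hnn, hmn, hnm]
    simp
  have key : (1 - m + n) * e * (1 + m - n) = e + m + n := by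
    have h1' : (1 - m + n) * e = e + n := by
      rw [add_mul, sub_mul, one_mul, hme, hne, sub_zero]
    rw [h1']
    have h2' : (e + n) * (1 + m - n) = e + e * m - e * n + n + n * m - n * n := by
      noncomm_ring
    rw [h2', hem, hen, hnm, hnn]
    abel
  have hfuv : f = (1 - m + n) * e * (1 + m - n) := by rw [hf, key]
  have hone : 1 - f = (1 - m + n) * (1 - e) * (1 + m - n) := by
    have h' : (1 - m + n) * (1 - e) * (1 + m - n) =
        (1 - m + n) * (1 + m - n) - (1 - m + n) * e * (1 + m - n) := by
      noncomm_ring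
    rw [h', huv, key, hf]
  constructor
  · intro r s
    have e1 : f * r * (1 - f) * s * f =
        (1 - m + n) * (e * ((1 + m - n) * r * (1 - m + n)) * (1 - e) *
          ((1 + m - n) * s * (1 - m + n)) * e) * (1 + m - n) := by
      rw [hone, hfuv]
      simp only [mul_assoc]
    rw [e1, h1, mul_zero, zero_mul]
  · intro r s
    have e2 : (1 - f) * r * f * s * (1 - f) =
        (1 - m + n) * ((1 - e) * ((1 + m - n) * r * (1 - m + n)) * e *
          ((1 + m - n) * s * (1 - m + n)) * (1 - e)) * (1 + m - n) := by
      rw [hone, hfuv]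
      simp only [mul_assoc]
    rw [e2, h2, mul_zero, zero_mul]
end

section
/- Let R be a ring with identity, e a Peirce trivial idempotent, and f an idempotent of R. Set g = efe, h = (1-e)f(1-e), m = ef(1-e), n = (1-e)fe, α = g + gm + ng, and β = h + mh + hn. Then α and β are orthogonal idempotents with f = α + β. -/
/-- Let `e` be Peirce trivial and `f` an idempotent. With
`g = efe`, `h = (1-e)f(1-e)`, `m = ef(1-e)`, `n = (1-e)fe`,
`α = g + g*m + n*g` and `β = h + m*h + h*n`, the elements `α` and `β` are
orthogonal idempotents with `f = α + β`. -/
theorem peirce_trivial_orthogonal_decomposition {R : Type*} [Ring R]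
    (e : R) (he : e * e = e)
    (h1 : ∀ r s : R, e * r * (1 - e) * s * e = 0)
    (h2 : ∀ r s : R, (1 - e) * r * e * s * (1 - e) = 0)
    (f : R) (hf : f * f = f)
    (g h m n α β : R)
    (hg : g = e * f * e) (hh : h = (1 - e) * f * (1 - e))
    (hm : m = e * f * (1 - e)) (hn : n = (1 - e) * f * e)
    (hα : α = g + g * m + n * g) (hβ : β = h + m * h + h * n) :
    α * α = α ∧ β * β = β ∧ α * β = 0 ∧ β * α = 0 ∧ f = α + β := by
  have hgg : g * g = g := by
    rw [hg]; linear_combination (norm := noncomm_ring) e*f*he*f*e - h1 f f + e*hf*e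
  have hhh : h * h = h := by
    rw [hh]
    linear_combination (norm := noncomm_ring)
      (1-e)*f*he*f*(1-e) - h2 f f + (1-e)*hf*(1-e)
  have hmg : m * g = 0 := by
    rw [hm, hg]; linear_combination (norm := noncomm_ring) -(e*f*he*f*e)
  have hgn : g * n = 0 := by
    rw [hg, hn]; linear_combination (norm := noncomm_ring) -(e*f*he*f*e)
  have hmm : m * m = 0 := by
    rw [hm]; linear_combination (norm := noncomm_ring) -(e*f*he*f*(1-e))
  have hnn : n * n = 0 := by
    rw [hn]; linear_combination (norm := noncomm_ring) -((1-e)*f*he*f*e)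
  have hhm : h * m = 0 := by
    rw [hh, hm]; linear_combination (norm := noncomm_ring) -((1-e)*f*he*f*(1-e))
  have hnh : n * h = 0 := by
    rw [hn, hh]; linear_combination (norm := noncomm_ring) -((1-e)*f*he*f*(1-e))
  have hgh : g * h = 0 := by
    rw [hg, hh]; linear_combination (norm := noncomm_ring) -(e*f*he*f*(1-e))
  have hhg : h * g = 0 := by
    rw [hh, hg]; linear_combination (norm := noncomm_ring) -((1-e)*f*he*f*e)
  have hmn : m * n = 0 := by
    rw [hm, hn]; linear_combination (norm := noncomm_ring) h1 f f + e*f*he*f*e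
  have hnm : n * m = 0 := by
    rw [hn, hm]
    linear_combination (norm := noncomm_ring) h2 f f + (1-e)*f*he*f*(1-e)
  have hsm : g * m + m * h = m := by
    rw [hg, hm, hh]
    linear_combination (norm := noncomm_ring)
      2*(e*f*he*f*(1-e)) + e*hf*(1-e)
  have hsn : n * g + h * n = n := by
    rw [hn, hg, hh]
    linear_combination (norm := noncomm_ring)
      2*((1-e)*f*he*f*e) + (1-e)*hf*e
  have hsum : g + m + n + h = f := by
    rw [hg, hm, hn, hh]; noncomm_ring
  -- derived letter-level facts
  have hmh : m * h = m - g * m := by linear_combination (norm := noncomm_ring) hsm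
  have hng' : n * g = n - h * n := by linear_combination (norm := noncomm_ring) hsn
  have hgmh : g * (m * h) = 0 := by
    rw [hmh]; rw [mul_sub, ← mul_assoc, hgg]; simp
  have hhng : h * (n * g) = 0 := by
    rw [hng']; rw [mul_sub, ← mul_assoc, hhh]; simp
  have hngm : (n * g) * m = 0 := by
    rw [hng', sub_mul, hnm, mul_assoc, hnm, mul_zero, sub_zero]
  have hmhn : (m * h) * n = 0 := by
    rw [hmh, sub_mul, hmn, mul_assoc, hmn, mul_zero, sub_zero]
  refine ⟨?_, ?_, ?_, ?_, ?_⟩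
  · -- α * α = α
    have expand : α * α =
        g*g + g*(g*m) + g*(n*g) + (g*m)*g + (g*m)*(g*m) + (g*m)*(n*g)
          + (n*g)*g + (n*g)*(g*m) + (n*g)*(n*g) := by
      rw [hα]; noncomm_ring
    have t2 : g*(g*m) = g*m := by rw [← mul_assoc, hgg]
    have t3 : g*(n*g) = 0 := by rw [← mul_assoc, hgn, zero_mul]
    have t4 : (g*m)*g = 0 := by rw [mul_assoc, hmg, mul_zero]
    have t5 : (g*m)*(g*m) = 0 := by rw [mul_assoc, ← mul_assoc m, hmg, zero_mul, mul_zero]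
    have t6 : (g*m)*(n*g) = 0 := by rw [mul_assoc, ← mul_assoc m, hmn, zero_mul, mul_zero]
    have t7 : (n*g)*g = n*g := by rw [mul_assoc, hgg]
    have t8 : (n*g)*(g*m) = 0 := by rw [← mul_assoc, mul_assoc n g g, hgg, hngm]
    have t9 : (n*g)*(n*g) = 0 := by rw [mul_assoc, ← mul_assoc g, hgn, zero_mul, mul_zero]
    rw [expand, hgg, t2, t3, t4, t5, t6, t7, t8, t9, hα]; abel
  · -- β * β = β
    have expand : β * β =
        h*h + h*(m*h) + h*(h*n) + (m*h)*h + (m*h)*(m*h) + (m*h)*(h*n)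
          + (h*n)*h + (h*n)*(m*h) + (h*n)*(h*n) := by
      rw [hβ]; noncomm_ring
    have t2 : h*(m*h) = 0 := by rw [← mul_assoc, hhm, zero_mul]
    have t3 : h*(h*n) = h*n := by rw [← mul_assoc, hhh]
    have t4 : (m*h)*h = m*h := by rw [mul_assoc, hhh]
    have t5 : (m*h)*(m*h) = 0 := by rw [mul_assoc, ← mul_assoc h, hhm, zero_mul, mul_zero]
    have t6 : (m*h)*(h*n) = 0 := by rw [← mul_assoc, mul_assoc m h h, hhh, hmhn]
    have t7 : (h*n)*h = 0 := by rw [mul_assoc, hnh, mul_zero]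
    have t8 : (h*n)*(m*h) = 0 := by rw [mul_assoc, ← mul_assoc n, hnm, zero_mul, mul_zero]
    have t9 : (h*n)*(h*n) = 0 := by rw [mul_assoc, ← mul_assoc n, hnh, zero_mul, mul_zero]
    rw [expand, hhh, t2, t3, t4, t5, t6, t7, t8, t9, hβ]; abel
  · -- α * β = 0
    have expand : α * β =
        g*h + g*(m*h) + g*(h*n) + (g*m)*h + (g*m)*(m*h) + (g*m)*(h*n)
          + (n*g)*h + (n*g)*(m*h) + (n*g)*(h*n) := by
      rw [hα, hβ]; noncomm_ring
    have t3 : g*(h*n) = 0 := by rw [← mul_assoc, hgh, zero_mul]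
    have t4 : (g*m)*h = 0 := by rw [mul_assoc, ← hgmh]
    have t5 : (g*m)*(m*h) = 0 := by rw [mul_assoc, ← mul_assoc m, hmm]; simp
    have t6 : (g*m)*(h*n) = 0 := by
      rw [← mul_assoc, mul_assoc g m h, hgmh]; simp
    have t7 : (n*g)*h = 0 := by rw [mul_assoc, hgh, mul_zero]
    have t8 : (n*g)*(m*h) = 0 := by
      rw [← mul_assoc, hngm]; simp
    have t9 : (n*g)*(h*n) = 0 := by rw [mul_assoc, ← mul_assoc g, hgh]; simp
    rw [expand, hgh, hgmh, t3, t4, t5, t6, t7, t8, t9]; simp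
  · -- β * α = 0
    have expand : β * α =
        h*g + h*(g*m) + h*(n*g) + (m*h)*g + (m*h)*(g*m) + (m*h)*(n*g)
          + (h*n)*g + (h*n)*(g*m) + (h*n)*(n*g) := by
      rw [hα, hβ]; noncomm_ring
    have t2 : h*(g*m) = 0 := by rw [← mul_assoc, hhg, zero_mul]
    have t4 : (m*h)*g = 0 := by rw [mul_assoc, hhg, mul_zero]
    have t5 : (m*h)*(g*m) = 0 := by rw [mul_assoc, ← mul_assoc h, hhg, zero_mul, mul_zero]
    have t6 : (m*h)*(n*g) = 0 := by rw [← mul_assoc, hmhn]; simp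
    have t7 : (h*n)*g = 0 := by rw [mul_assoc, ← hhng]
    have t8 : (h*n)*(g*m) = 0 := by
      rw [← mul_assoc, mul_assoc h n g, hhng]; simp
    have t9 : (h*n)*(n*g) = 0 := by rw [mul_assoc, ← mul_assoc n, hnn]; simp
    rw [expand, hhg, t2, hhng, t4, t5, t6, t7, t8, t9]; simp
  · -- f = α + β
    rw [hα, hβ, ← hsum]
    linear_combination (norm := noncomm_ring) -hsm - hsn
end

section
/- Let R be a ring with identity, and let e and f both be Peirce trivial idempotents of R. Then g = efe is an inner Peirce trivial idempotent of the ring A = eRe, i.e., gA(e-g)Ag = 0, and also an outer Peirce trivial idempotent of A, i.e., (e-g)AgA(e-g) = 0. Hence efe is a Peirce trivial idempotent of eRe. -/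
/-- If `e` and `f` are both Peirce trivial idempotents of `R`,
then `g = efe` is an idempotent of the corner ring `A = eRe` which is both
inner Peirce trivial in `A` (`gA(e-g)Ag = 0`) and outer Peirce trivial in `A`
(`(e-g)AgA(e-g) = 0`); hence `efe` is a Peirce trivial idempotent of `eRe`. -/
theorem product_of_peirce_trivials {R : Type*} [Ring R]
    (e : R) (he : e * e = e)
    (he1 : ∀ r s : R, e * r * (1 - e) * s * e = 0)
    (he2 : ∀ r s : R, (1 - e) * r * e * s * (1 - e) = 0)
    (f : R) (hf : f * f = f)
    (hf1 : ∀ r s : R, f * r * (1 - f) * s * f = 0)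
    (hf2 : ∀ r s : R, (1 - f) * r * f * s * (1 - f) = 0)
    (g : R) (hg : g = e * f * e) :
    g * g = g ∧
    (∀ a b : R, g * (e * a * e) * (e - g) * (e * b * e) * g = 0) ∧
    (∀ a b : R, (e - g) * (e * a * e) * g * (e * b * e) * (e - g) = 0) := by
  subst hg
  have hee : ∀ x : R, e * (e * x) = e * x := fun x => by rw [← mul_assoc, he]
  have hff : ∀ x : R, f * (f * x) = f * x := fun x => by rw [← mul_assoc, hf]
  refine ⟨?_, ?_, ?_⟩
  · have h := he1 f f
    have hexp : e * f * (1 - e) * f * e = e * f * e - e * f * e * f * e := by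
      simp only [mul_sub, sub_mul, mul_one, one_mul]
      rw [mul_assoc e f f, hf]
    rw [hexp, sub_eq_zero] at h
    have : e * f * e * (e * f * e) = e * f * e * f * e := by
      simp only [mul_assoc, hee]
    rw [this, ← h]
  · intro a b
    have h := hf1 (e * a * e) (e * b * e)
    have h' : e * (f * (e * a * e) * (1 - f) * (e * b * e) * f) * e = 0 := by
      rw [h, mul_zero, zero_mul]
    have hexp : e * f * e * (e * a * e) * (e - e * f * e) * (e * b * e) * (e * f * e)
        = e * (f * (e * a * e) * (1 - f) * (e * b * e) * f) * e := by
      simp only [mul_sub, sub_mul, mul_one, one_mul, mul_assoc, hee, hff]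
    rw [hexp, h']
  · intro a b
    have h := hf2 (e * a * e) (e * b * e)
    have h' : e * ((1 - f) * (e * a * e) * f * (e * b * e) * (1 - f)) * e = 0 := by
      rw [h, mul_zero, zero_mul]
    have hexp : (e - e * f * e) * (e * a * e) * (e * f * e) * (e * b * e) * (e - e * f * e)
        = e * ((1 - f) * (e * a * e) * f * (e * b * e) * (1 - f)) * e := by
      simp only [mul_sub, sub_mul, mul_one, one_mul, mul_assoc, hee, hff]
    rw [hexp, h']
end

section
/- Let R be a ring with identity, e a Peirce trivial idempotent of R, and g an idempotent of eRe that is Peirce trivial in the ring eRe. Then for any m ∈ eR(1-e) and n ∈ (1-e)Re, the element h = g + gm + ng is an inner Peirce trivial idempotent of R. -/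
/-- Let `e` be a Peirce trivial idempotent of `R` and `g` an
idempotent of `eRe` which is Peirce trivial in the ring `eRe`. Then for any
`m ∈ eR(1-e)` and `n ∈ (1-e)Re`, the element `h = g + g*m + n*g` is an inner
Peirce trivial idempotent of `R`. -/
theorem corner_peirce_trivial_gives_inner {R : Type*} [Ring R]
    (e : R) (he : e * e = e)
    (he1 : ∀ r s : R, e * r * (1 - e) * s * e = 0)
    (he2 : ∀ r s : R, (1 - e) * r * e * s * (1 - e) = 0)
    (g : R) (hgmem : g = e * g * e) (hg : g * g = g)
    (hg1 : ∀ a b : R, g * (e * a * e) * (e - g) * (e * b * e) * g = 0)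
    (hg2 : ∀ a b : R, (e - g) * (e * a * e) * g * (e * b * e) * (e - g) = 0)
    (m n : R) (hm : m = e * m * (1 - e)) (hn : n = (1 - e) * n * e) :
    (g + g * m + n * g) * (g + g * m + n * g) = g + g * m + n * g ∧
    (∀ r s : R, (g + g * m + n * g) * r * (1 - (g + g * m + n * g)) * s *
      (g + g * m + n * g) = 0) := by
  have ge : g * e = g := by
    linear_combination (norm := noncomm_ring) hgmem * e + (e*g) * he - hgmem
  have eg : e * g = g := by
    linear_combination (norm := noncomm_ring) e * hgmem + he * (g*e) - hgmem
  have ne' : n * e = n := by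
    linear_combination (norm := noncomm_ring) hn * e + ((1-e)*n) * he - hn
  have Z1 : ∀ r : R, m * r * e = 0 := fun r => by
    linear_combination (norm := noncomm_ring) hm * r * e + he1 m r
  have Z2 : ∀ r : R, e * r * n = 0 := fun r => by
    linear_combination (norm := noncomm_ring) e * r * hn + he1 r n
  have m1 : m * (1 - e) = m := by
    linear_combination (norm := noncomm_ring) - Z1 1
  have B1 : ∀ x : R, g * x * n = 0 := fun x => by
    linear_combination (norm := noncomm_ring) g * Z2 x - ge * (x*n)
  have Zmg : ∀ x : R, m * x * g = 0 := fun x => by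
    linear_combination (norm := noncomm_ring) Z1 (x*g) - (m*x) * ge
  have Zmn : ∀ x : R, m * x * n = 0 := fun x => by
    linear_combination (norm := noncomm_ring) Z1 (x*n) - (m*x) * ne'
  have Znm : ∀ x : R, n * x * m = 0 := fun x => by
    linear_combination (norm := noncomm_ring)
      hn * (x*m) - ((1-e)*n*e*x) * m1 + he2 n (x*m)
  have K : ∀ a b : R, g * a * b * g = g * a * g * b * g := fun a b => by
    linear_combination (norm := noncomm_ring)
      - (ge * (a*b*g)) - ((g*e*a*b) * eg) + g * (he1 a b) * g
      - (g*e*a) * he * (e*b*e*g) - (g*e*a) * he * (b*e*g)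
      + hg1 a b
      + ge * (a*e*g*e*b*e*g) + (g*a) * eg * (e*b*e*g)
      + (g*a*g*e*b) * eg + (g*a) * ge * (b*g)
  have Egh : ∀ x : R, g * x * (g + g*m + n*g) = g*x*g + g*x*g*m := fun x => by
    linear_combination (norm := noncomm_ring) B1 x * g
  have Emh : ∀ x : R, m * x * (g + g*m + n*g) = 0 := fun x => by
    linear_combination (norm := noncomm_ring) Zmg x + Zmg x * m + Zmn x * g
  have E1 : ∀ x : R, (g + g*m + n*g) * x * (g + g*m + n*g)
      = g*x*g + g*x*g*m + n*(g*x*g) := fun x => by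
    linear_combination (norm := noncomm_ring)
      B1 x * g + g * Zmg x + g * Zmg x * m + g * Zmn x * g
      + Znm (g*x*g) + n * B1 x * g
  constructor
  · linear_combination (norm := noncomm_ring)
      hg + hg * m + B1 1 * g + g * Zmg 1 + g * Zmg 1 * m + g * Zmn 1 * g
      + n * hg + Znm (g*g) + n * B1 1 * g
  · intro r s
    linear_combination (norm := noncomm_ring)
      E1 (r*s) + K r s + (K r s) * m + n * (K r s)
      - (g*r) * (Egh s) - (g*r*g) * (Emh s) - (n*g*r) * (Egh s)
      - Znm (g*r*g*s*g) - (E1 r) * (s*(g + g*m + n*g))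
end

section
/- Let R be a ring with identity and {e₁,…,eₙ}, {f₁,…,fₙ} two complete sets of pairwise orthogonal idempotents (each summing to 1) such that the left R-modules Reᵢ and Rfᵢ are isomorphic for every i. Then there is a unit s ∈ R such that s eᵢ s⁻¹ = fᵢ for all i. -/
/-- If `{e₁,…,eₙ}` and `{f₁,…,fₙ}` are two complete sets of
pairwise orthogonal idempotents (summing to `1`) such that `Reᵢ ≅ Rfᵢ` as left
`R`-modules for each `i`, then there is a unit `s ∈ R` with `s eᵢ s⁻¹ = fᵢ`
for all `i`. -/
theorem conjugate_complete_orthogonal_idempotents {R : Type*} [Ring R] {n : ℕ}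
    (e f : Fin n → R)
    (hee : ∀ i, e i * e i = e i) (hff : ∀ i, f i * f i = f i)
    (heo : ∀ i j, i ≠ j → e i * e j = 0) (hfo : ∀ i j, i ≠ j → f i * f j = 0)
    (hes : ∑ i, e i = 1) (hfs : ∑ i, f i = 1)
    (hiso : ∀ i, Nonempty ((Submodule.span R {e i} : Submodule R R) ≃ₗ[R]
      (Submodule.span R {f i} : Submodule R R))) :
    ∃ s : Rˣ, ∀ i, (s : R) * e i * (↑s⁻¹ : R) = f i := by
  classical
  have he' : ∀ i, e i ∈ Submodule.span R {e i} := fun i =>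
    Submodule.mem_span_singleton_self _
  have hf' : ∀ i, f i ∈ Submodule.span R {f i} := fun i =>
    Submodule.mem_span_singleton_self _
  let φ : ∀ i, (Submodule.span R {e i} : Submodule R R) ≃ₗ[R]
      (Submodule.span R {f i} : Submodule R R) := fun i => (hiso i).some
  set a : Fin n → R := fun i => ((φ i) ⟨e i, he' i⟩ : R) with ha
  set b : Fin n → R := fun i => (((φ i).symm) ⟨f i, hf' i⟩ : R) with hb
  have hmem_a : ∀ i, a i ∈ Submodule.span R {f i} := fun i => ((φ i) ⟨e i, he' i⟩).2
  have hmem_b : ∀ i, b i ∈ Submodule.span R {e i} := fun i => (((φ i).symm) ⟨f i, hf' i⟩).2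
  have hbe : ∀ i, b i * e i = b i := by
    intro i
    obtain ⟨r, hr⟩ := Submodule.mem_span_singleton.mp (hmem_b i)
    rw [← hr, smul_eq_mul, mul_assoc, hee]
  have haf : ∀ i, a i * f i = a i := by
    intro i
    obtain ⟨r, hr⟩ := Submodule.mem_span_singleton.mp (hmem_a i)
    rw [← hr, smul_eq_mul, mul_assoc, hff]
  have hea : ∀ i, e i * a i = a i := by
    intro i
    have h1 : (e i) • (⟨e i, he' i⟩ : Submodule.span R {e i}) = ⟨e i, he' i⟩ :=
      Subtype.ext (by simp [smul_eq_mul, hee i])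
    calc e i * a i = (((φ i) ((e i) • ⟨e i, he' i⟩)) : R) := by
          rw [map_smul]; rfl
      _ = a i := by rw [h1]
  have hfb : ∀ i, f i * b i = b i := by
    intro i
    have h1 : (f i) • (⟨f i, hf' i⟩ : Submodule.span R {f i}) = ⟨f i, hf' i⟩ :=
      Subtype.ext (by simp [smul_eq_mul, hff i])
    calc f i * b i = ((((φ i).symm) ((f i) • ⟨f i, hf' i⟩)) : R) := by
          rw [map_smul]; rfl
      _ = b i := by rw [h1]
  have hba : ∀ i, b i * a i = f i := by
    intro i
    have h1 : (b i) • (⟨e i, he' i⟩ : Submodule.span R {e i}) = ((φ i).symm) ⟨f i, hf' i⟩ :=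
      Subtype.ext (by simp [smul_eq_mul, hbe i]; rfl)
    calc b i * a i = (((φ i) ((b i) • ⟨e i, he' i⟩)) : R) := by
          rw [map_smul]; rfl
      _ = f i := by rw [h1, LinearEquiv.apply_symm_apply]
  have hab : ∀ i, a i * b i = e i := by
    intro i
    have h1 : (a i) • (⟨f i, hf' i⟩ : Submodule.span R {f i}) = (φ i) ⟨e i, he' i⟩ :=
      Subtype.ext (by simp [smul_eq_mul, haf i]; rfl)
    calc a i * b i = ((((φ i).symm) ((a i) • ⟨f i, hf' i⟩)) : R) := by
          rw [map_smul]; rfl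
      _ = e i := by rw [h1, LinearEquiv.symm_apply_apply]
  have hba0 : ∀ i j, i ≠ j → b i * a j = 0 := by
    intro i j hij
    rw [← hbe i, ← hea j, mul_assoc, ← mul_assoc (e i), heo i j hij, zero_mul, mul_zero]
  have hab0 : ∀ i j, i ≠ j → a i * b j = 0 := by
    intro i j hij
    rw [← haf i, ← hfb j, mul_assoc, ← mul_assoc (f i), hfo i j hij, zero_mul, mul_zero]
  have hst : (∑ i, b i) * (∑ i, a i) = 1 := by
    rw [Finset.sum_mul]
    have : ∀ i ∈ Finset.univ, b i * (∑ j, a j) = f i := by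
      intro i _
      rw [Finset.mul_sum]
      rw [Finset.sum_eq_single i (fun j _ hj => hba0 i j (Ne.symm hj))
        (fun h => absurd (Finset.mem_univ i) h)]
      exact hba i
    rw [Finset.sum_congr rfl this, hfs]
  have hts : (∑ i, a i) * (∑ i, b i) = 1 := by
    rw [Finset.sum_mul]
    have : ∀ i ∈ Finset.univ, a i * (∑ j, b j) = e i := by
      intro i _
      rw [Finset.mul_sum]
      rw [Finset.sum_eq_single i (fun j _ hj => hab0 i j (Ne.symm hj))
        (fun h => absurd (Finset.mem_univ i) h)]
      exact hab i
    rw [Finset.sum_congr rfl this, hes]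
  refine ⟨⟨∑ i, b i, ∑ i, a i, hst, hts⟩, fun i => ?_⟩
  show (∑ j, b j) * e i * (∑ j, a j) = f i
  have h1 : (∑ j, b j) * e i = b i := by
    rw [Finset.sum_mul]
    rw [Finset.sum_eq_single i
      (fun j _ hj => by rw [← hbe j, mul_assoc, heo j i hj, mul_zero])
      (fun h => absurd (Finset.mem_univ i) h)]
    exact hbe i
  rw [h1, Finset.mul_sum]
  rw [Finset.sum_eq_single i (fun j _ hj => hba0 i j (Ne.symm hj))
    (fun h => absurd (Finset.mem_univ i) h)]
  exact hba i
end

section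
/- Let R be a ring with identity and suppose there exist pairwise orthogonal idempotents e₁,…,eₙ summing to 1 such that eᵢReⱼ · eⱼReᵢ = 0 whenever i ≠ j (e.g., arising from an n-Peirce ring structure). Then the additive subgroup D = Σ_{i≠j} eᵢReⱼ is an ideal of R that is nilpotent of nilpotency index at most n. -/
/-!
For `i ≠ j` and any `y`, `e j * y * (e i * r * e j) = (e j * y * e i) * (e i * r * e j) = 0`.
Hence left multiplication by a generator `e i * r * e j` of `D` sends an element annihilated on
the left by the corners `e t * R`, `t ∈ s`, to one annihilated by the corners indexed by
`insert j s`, or to `0` when `j ∈ s`. By bilinearity a product of `m` elements of `D` is a sum of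
elements each annihilated by `m` distinct corners, and for `m = n` every such element `q` is
`q = ∑ t, e t * q = 0`.

For the ideal property expand `a = ∑ k, e k * a`: the only summand of `a * (e i * r * e j)`
that is not a generator is `e j * a * (e i * r * e j) = 0`, and symmetrically on the right.
-/

open Finset

section OffDiag

variable {R ι : Type*} [Ring R]

def peirceOffDiag (e : ι → R) : AddSubgroup R :=
  AddSubgroup.closure {x : R | ∃ i j, ∃ r : R, i ≠ j ∧ x = e i * r * e j}

def leftAnn (e : ι → R) (s : Finset ι) : AddSubgroup R :=
  ⨅ t ∈ s, ⨅ y : R, (AddMonoidHom.mulLeft (e t * y)).ker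

def leftAnnOfCard (e : ι → R) (m : ℕ) : AddSubgroup R :=
  ⨆ (s : Finset ι) (_ : s.card = m), leftAnn e s

variable {e : ι → R}

theorem mem_leftAnn {s : Finset ι} {q : R} :
    q ∈ leftAnn e s ↔ ∀ t ∈ s, ∀ y, e t * y * q = 0 := by
  simp [leftAnn]

theorem mem_leftAnnOfCard {s : Finset ι} {m : ℕ} {q : R} (hs : s.card = m)
    (hq : q ∈ leftAnn e s) : q ∈ leftAnnOfCard e m :=
  AddSubgroup.mem_iSup_of_mem s (AddSubgroup.mem_iSup_of_mem hs hq)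

theorem mul_peirce_eq_zero (hee : ∀ i, IsIdempotentElem (e i))
    (hzero : ∀ i j, i ≠ j → ∀ x y : R, (e i * x * e j) * (e j * y * e i) = 0)
    {i j : ι} (hij : i ≠ j) (y r : R) : e j * y * (e i * r * e j) = 0 := by
  calc e j * y * (e i * r * e j) = (e j * y * e i) * (e i * r * e j) := by
        simp only [mul_assoc, ← mul_assoc (e i) (e i), (hee i).eq]
    _ = 0 := hzero j i hij.symm y r

theorem peirce_mul_eq_zero (hee : ∀ i, IsIdempotentElem (e i))
    (hzero : ∀ i j, i ≠ j → ∀ x y : R, (e i * x * e j) * (e j * y * e i) = 0)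
    {i j : ι} (hij : i ≠ j) (r y : R) : e i * r * e j * y * e i = 0 := by
  calc e i * r * e j * y * e i = (e i * r * e j) * (e j * y * e i) := by
        simp only [mul_assoc, ← mul_assoc (e j) (e j), (hee j).eq]
    _ = 0 := hzero i j hij r y

theorem peirce_mul_mem_leftAnn_insert [DecidableEq ι] (hee : ∀ i, IsIdempotentElem (e i))
    (hzero : ∀ i j, i ≠ j → ∀ x y : R, (e i * x * e j) * (e j * y * e i) = 0)
    {i j : ι} (hij : i ≠ j) (r : R) {s : Finset ι} {q : R} (hq : q ∈ leftAnn e s) :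
    e i * r * e j * q ∈ leftAnn e (insert j s) := by
  rw [mem_leftAnn] at hq ⊢
  refine forall_mem_insert _ _ _ |>.2 ⟨fun y => ?_, fun t ht y => ?_⟩
  · rw [← mul_assoc, mul_peirce_eq_zero hee hzero hij, zero_mul]
  · rw [← mul_assoc, mul_assoc (e t), hq t ht]

theorem peirce_mul_mem_leftAnnOfCard_succ (hee : ∀ i, IsIdempotentElem (e i))
    (hzero : ∀ i j, i ≠ j → ∀ x y : R, (e i * x * e j) * (e j * y * e i) = 0)
    {i j : ι} (hij : i ≠ j) (r : R) {m : ℕ} {q : R} (hq : q ∈ leftAnnOfCard e m) :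
    e i * r * e j * q ∈ leftAnnOfCard e (m + 1) := by
  classical
  suffices leftAnnOfCard e m ≤
      (leftAnnOfCard e (m + 1)).comap (AddMonoidHom.mulLeft (e i * r * e j)) from this hq
  refine iSup₂_le fun s hs q hq => ?_
  change e i * r * e j * q ∈ leftAnnOfCard e (m + 1)
  by_cases hj : j ∈ s
  · rw [mul_assoc, ← mul_one (e j), mem_leftAnn.1 hq j hj 1, mul_zero]
    exact zero_mem _
  · exact mem_leftAnnOfCard (by rw [card_insert_of_notMem hj, hs])
      (peirce_mul_mem_leftAnn_insert hee hzero hij r hq)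

theorem mul_mem_leftAnnOfCard_succ (hee : ∀ i, IsIdempotentElem (e i))
    (hzero : ∀ i j, i ≠ j → ∀ x y : R, (e i * x * e j) * (e j * y * e i) = 0)
    {m : ℕ} {x q : R} (hx : x ∈ peirceOffDiag e) (hq : q ∈ leftAnnOfCard e m) :
    x * q ∈ leftAnnOfCard e (m + 1) := by
  refine (AddSubgroup.closure_le ((leftAnnOfCard e (m + 1)).comap
    (AddMonoidHom.mulRight q))).2 ?_ hx
  rintro _ ⟨i, j, r, hij, rfl⟩
  exact peirce_mul_mem_leftAnnOfCard_succ hee hzero hij r hq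

theorem list_prod_mem_leftAnnOfCard (hee : ∀ i, IsIdempotentElem (e i))
    (hzero : ∀ i j, i ≠ j → ∀ x y : R, (e i * x * e j) * (e j * y * e i) = 0) :
    ∀ l : List R, (∀ x ∈ l, x ∈ peirceOffDiag e) → l.prod ∈ leftAnnOfCard e l.length
  | [], _ => mem_leftAnnOfCard card_empty (mem_leftAnn.2 fun _ ht => absurd ht (notMem_empty _))
  | x :: l, hl => mul_mem_leftAnnOfCard_succ hee hzero (hl x List.mem_cons_self)
      (list_prod_mem_leftAnnOfCard hee hzero l fun y hy => hl y (List.mem_cons_of_mem x hy))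

variable [Fintype ι]

theorem mul_mem_peirceOffDiag_left (hee : ∀ i, IsIdempotentElem (e i)) (hes : ∑ i, e i = 1)
    (hzero : ∀ i j, i ≠ j → ∀ x y : R, (e i * x * e j) * (e j * y * e i) = 0)
    (a : R) {x : R} (hx : x ∈ peirceOffDiag e) : a * x ∈ peirceOffDiag e := by
  refine (AddSubgroup.closure_le ((peirceOffDiag e).comap (AddMonoidHom.mulLeft a))).2 ?_ hx
  rintro _ ⟨i, j, r, hij, rfl⟩
  change a * (e i * r * e j) ∈ peirceOffDiag e
  rw [← one_mul a, ← hes, sum_mul, sum_mul]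
  refine sum_mem fun k _ => ?_
  obtain rfl | hkj := eq_or_ne k j
  · rw [mul_peirce_eq_zero hee hzero hij]
    exact zero_mem _
  · exact AddSubgroup.subset_closure ⟨k, j, a * e i * r, hkj, by simp only [mul_assoc]⟩

theorem mul_mem_peirceOffDiag_right (hee : ∀ i, IsIdempotentElem (e i)) (hes : ∑ i, e i = 1)
    (hzero : ∀ i j, i ≠ j → ∀ x y : R, (e i * x * e j) * (e j * y * e i) = 0)
    (a : R) {x : R} (hx : x ∈ peirceOffDiag e) : x * a ∈ peirceOffDiag e := by
  refine (AddSubgroup.closure_le ((peirceOffDiag e).comap (AddMonoidHom.mulRight a))).2 ?_ hx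
  rintro _ ⟨i, j, r, hij, rfl⟩
  change e i * r * e j * a ∈ peirceOffDiag e
  rw [← mul_one a, ← hes, mul_sum, mul_sum]
  refine sum_mem fun k _ => ?_
  obtain rfl | hik := eq_or_ne k i
  · rw [← mul_assoc, peirce_mul_eq_zero hee hzero hij]
    exact zero_mem _
  · exact AddSubgroup.subset_closure ⟨i, k, r * e j * a, hik.symm, by simp only [mul_assoc]⟩

theorem leftAnnOfCard_card_eq_bot (hes : ∑ i, e i = 1) :
    leftAnnOfCard e (Fintype.card ι) = ⊥ := by
  refine eq_bot_iff.2 (iSup₂_le fun s hs q hq => ?_)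
  rw [eq_univ_of_card s hs, mem_leftAnn] at hq
  calc q = ∑ t, e t * 1 * q := by simp only [mul_one, ← sum_mul, hes, one_mul]
    _ = 0 := sum_eq_zero fun t _ => hq t (mem_univ t) 1

theorem list_prod_eq_zero_of_mem_peirceOffDiag (hee : ∀ i, IsIdempotentElem (e i))
    (hes : ∑ i, e i = 1)
    (hzero : ∀ i j, i ≠ j → ∀ x y : R, (e i * x * e j) * (e j * y * e i) = 0)
    {l : List R} (hl : l.length = Fintype.card ι) (hmem : ∀ x ∈ l, x ∈ peirceOffDiag e) :
    l.prod = 0 := by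
  have h := list_prod_mem_leftAnnOfCard hee hzero l hmem
  rwa [hl, leftAnnOfCard_card_eq_bot hes, AddSubgroup.mem_bot] at h

end OffDiag

theorem offdiagonal_ideal_nilpotent_general {R : Type*} [Ring R] {n : ℕ}
    (e : Fin n → R)
    (hee : ∀ i, e i * e i = e i)
    (hes : ∑ i, e i = 1)
    (hzero : ∀ i j, i ≠ j → ∀ x y : R, (e i * x * e j) * (e j * y * e i) = 0) :
    (∀ x ∈ AddSubgroup.closure {x : R | ∃ i j, ∃ r : R, i ≠ j ∧ x = e i * r * e j},
      ∀ a : R,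
      a * x ∈ AddSubgroup.closure {x : R | ∃ i j, ∃ r : R, i ≠ j ∧ x = e i * r * e j} ∧
      x * a ∈ AddSubgroup.closure {x : R | ∃ i j, ∃ r : R, i ≠ j ∧ x = e i * r * e j}) ∧
    (∀ l : List R, l.length = n →
      (∀ x ∈ l, x ∈ AddSubgroup.closure {x : R | ∃ i j, ∃ r : R, i ≠ j ∧ x = e i * r * e j}) →
      l.prod = 0) := by
  refine ⟨fun x hx a => ⟨mul_mem_peirceOffDiag_left hee hes hzero a hx,
    mul_mem_peirceOffDiag_right hee hes hzero a hx⟩, fun l hl hmem => ?_⟩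
  exact list_prod_eq_zero_of_mem_peirceOffDiag hee hes hzero
    (hl.trans (Fintype.card_fin n).symm) hmem

/-- If `e₁,…,eₙ` are pairwise orthogonal idempotents summing to
`1` with `eᵢReⱼ ⋅ eⱼReᵢ = 0` for `i ≠ j`, then the additive subgroup
`D = Σ_{i≠j} eᵢReⱼ` is a two-sided ideal of `R` which is nilpotent of index at
most `n` (every product of `n` elements of `D` vanishes). -/
theorem offdiagonal_ideal_nilpotent {R : Type*} [Ring R] {n : ℕ}
    (e : Fin n → R)
    (hee : ∀ i, e i * e i = e i)
    (heo : ∀ i j, i ≠ j → e i * e j = 0)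
    (hes : ∑ i, e i = 1)
    (hzero : ∀ i j, i ≠ j → ∀ x y : R, (e i * x * e j) * (e j * y * e i) = 0) :
    (∀ x ∈ AddSubgroup.closure {x : R | ∃ i j, ∃ r : R, i ≠ j ∧ x = e i * r * e j},
      ∀ a : R,
      a * x ∈ AddSubgroup.closure {x : R | ∃ i j, ∃ r : R, i ≠ j ∧ x = e i * r * e j} ∧
      x * a ∈ AddSubgroup.closure {x : R | ∃ i j, ∃ r : R, i ≠ j ∧ x = e i * r * e j}) ∧
    (∀ l : List R, l.length = n →
      (∀ x ∈ l, x ∈ AddSubgroup.closure {x : R | ∃ i j, ∃ r : R, i ≠ j ∧ x = e i * r * e j}) →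
      l.prod = 0) :=
  offdiagonal_ideal_nilpotent_general e hee hes hzero
end

section
/- Let R be a ring with identity, e an idempotent, and let D = eR(1-e) + (1-e)Re. If e is Peirce trivial, then R is the (internal) direct sum of the subring S = eRe + (1-e)R(1-e) and the ideal D, and D² = 0; moreover S is ring-isomorphic to the direct product of eRe and (1-e)R(1-e). -/
/-- If `e` is Peirce trivial, then `R` is the internal direct sum
of the subring `S = eRe + (1-e)R(1-e)` and the ideal `D = eR(1-e) + (1-e)Re`,
`D² = 0`, and `S` is ring-isomorphic to the direct product of `eRe` and
`(1-e)R(1-e)` (via `s ↦ (ese, (1-e)s(1-e))`, which on `S` is additive,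
multiplicative in each component, injective, and surjective onto the product
of the corners). -/
theorem wedderburn_like_decomposition {R : Type*} [Ring R]
    (e : R) (he : e * e = e)
    (h1 : ∀ r s : R, e * r * (1 - e) * s * e = 0)
    (h2 : ∀ r s : R, (1 - e) * r * e * s * (1 - e) = 0) :
    -- R = S + D
    (∀ x : R, ∃ a b r s : R,
      x = (e * a * e + (1 - e) * b * (1 - e)) + (e * r * (1 - e) + (1 - e) * s * e)) ∧
    -- S ∩ D = 0
    (∀ a b r s : R, e * a * e + (1 - e) * b * (1 - e) = e * r * (1 - e) + (1 - e) * s * e →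
      e * a * e + (1 - e) * b * (1 - e) = 0) ∧
    -- D is an ideal of R
    (∀ r s a : R, (∃ r' s' : R,
        a * (e * r * (1 - e) + (1 - e) * s * e) = e * r' * (1 - e) + (1 - e) * s' * e) ∧
      (∃ r' s' : R,
        (e * r * (1 - e) + (1 - e) * s * e) * a = e * r' * (1 - e) + (1 - e) * s' * e)) ∧
    -- D² = 0
    (∀ r s r' s' : R,
      (e * r * (1 - e) + (1 - e) * s * e) * (e * r' * (1 - e) + (1 - e) * s' * e) = 0) ∧
    -- S is a subring: closed under multiplication and contains 1
    (∀ a b a' b' : R, ∃ c d : R,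
      (e * a * e + (1 - e) * b * (1 - e)) * (e * a' * e + (1 - e) * b' * (1 - e)) =
        e * c * e + (1 - e) * d * (1 - e)) ∧
    (∃ a b : R, (1 : R) = e * a * e + (1 - e) * b * (1 - e)) ∧
    -- S ≅ eRe × (1-e)R(1-e): the map x ↦ (exe, (1-e)x(1-e)) restricted to S is
    -- multiplicative, injective, and surjective onto the product of the corners
    (∀ x y : R, (∃ a b : R, x = e * a * e + (1 - e) * b * (1 - e)) →
      (∃ a b : R, y = e * a * e + (1 - e) * b * (1 - e)) →
      e * (x * y) * e = (e * x * e) * (e * y * e) ∧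
      (1 - e) * (x * y) * (1 - e) = ((1 - e) * x * (1 - e)) * ((1 - e) * y * (1 - e))) ∧
    (∀ x y : R, (∃ a b : R, x = e * a * e + (1 - e) * b * (1 - e)) →
      (∃ a b : R, y = e * a * e + (1 - e) * b * (1 - e)) →
      e * x * e = e * y * e → (1 - e) * x * (1 - e) = (1 - e) * y * (1 - e) → x = y) ∧
    (∀ u v : R, ∃ x : R, (∃ a b : R, x = e * a * e + (1 - e) * b * (1 - e)) ∧
      e * x * e = e * u * e ∧ (1 - e) * x * (1 - e) = (1 - e) * v * (1 - e)) := by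
  have hef : e * (1 - e) = 0 := by rw [mul_sub, he, mul_one, sub_self]
  have hfe : (1 - e) * e = 0 := by rw [sub_mul, he, one_mul, sub_self]
  have hff : (1 - e) * (1 - e) = 1 - e := by rw [mul_sub, mul_one, hfe, sub_zero]
  have L1 : ∀ a b : R, e * (e * a * e + (1 - e) * b * (1 - e)) * e = e * a * e := by
    intro a b
    have key : e * (e * a * e + (1 - e) * b * (1 - e)) * e
        = (e * e) * a * (e * e) + (e * (1 - e)) * b * ((1 - e) * e) := by noncomm_ring
    rw [key, he, hef, hfe]
    simp
  have L2 : ∀ a b : R, (1 - e) * (e * a * e + (1 - e) * b * (1 - e)) * (1 - e)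
      = (1 - e) * b * (1 - e) := by
    intro a b
    have key : (1 - e) * (e * a * e + (1 - e) * b * (1 - e)) * (1 - e)
        = ((1 - e) * e) * a * (e * (1 - e)) + ((1 - e) * (1 - e)) * b * ((1 - e) * (1 - e)) := by
      noncomm_ring
    rw [key, hef, hfe, hff]
    simp
  have L3 : ∀ a b a' b' : R,
      (e * a * e + (1 - e) * b * (1 - e)) * (e * a' * e + (1 - e) * b' * (1 - e))
        = e * (a * e * a') * e + (1 - e) * (b * (1 - e) * b') * (1 - e) := by
    intro a b a' b'
    have key : (e * a * e + (1 - e) * b * (1 - e)) * (e * a' * e + (1 - e) * b' * (1 - e))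
        = e * a * (e * e) * a' * e + (1 - e) * b * ((1 - e) * (1 - e)) * b' * (1 - e)
          + e * a * (e * (1 - e)) * b' * (1 - e) + (1 - e) * b * ((1 - e) * e) * a' * e := by
      noncomm_ring
    rw [key, he, hef, hfe, hff]
    simp
    noncomm_ring
  refine ⟨?_, ?_, ?_, ?_, ?_, ?_, ?_, ?_, ?_⟩
  · intro x
    exact ⟨x, x, x, x, by noncomm_ring⟩
  · intro a b r s h
    have kR : e * (e * r * (1 - e) + (1 - e) * s * e) * e = 0 := by
      have key : e * (e * r * (1 - e) + (1 - e) * s * e) * e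
          = (e * e) * r * ((1 - e) * e) + (e * (1 - e)) * s * (e * e) := by noncomm_ring
      rw [key, hef, hfe]
      simp
    have kR' : (1 - e) * (e * r * (1 - e) + (1 - e) * s * e) * (1 - e) = 0 := by
      have key : (1 - e) * (e * r * (1 - e) + (1 - e) * s * e) * (1 - e)
          = ((1 - e) * e) * r * ((1 - e) * (1 - e)) + ((1 - e) * (1 - e)) * s * (e * (1 - e)) := by
        noncomm_ring
      rw [key, hef, hfe]
      simp
    have hae : e * a * e = 0 := by rw [← L1 a b, h, kR]
    have hbf : (1 - e) * b * (1 - e) = 0 := by rw [← L2 a b, h, kR']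
    rw [hae, hbf, add_zero]
  · intro r s a
    constructor
    · refine ⟨a * e * r, a * (1 - e) * s, ?_⟩
      have key : a * (e * r * (1 - e) + (1 - e) * s * e)
          = e * (a * e * r) * (1 - e) + (1 - e) * (a * (1 - e) * s) * e
            + e * a * (1 - e) * s * e + (1 - e) * a * e * r * (1 - e) := by noncomm_ring
      rw [key, h1 a s, h2 a r, add_zero, add_zero]
    · refine ⟨r * (1 - e) * a, s * e * a, ?_⟩
      have key : (e * r * (1 - e) + (1 - e) * s * e) * a
          = e * (r * (1 - e) * a) * (1 - e) + (1 - e) * (s * e * a) * e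
            + e * r * (1 - e) * a * e + (1 - e) * s * e * a * (1 - e) := by noncomm_ring
      rw [key, h1 r a, h2 s a, add_zero, add_zero]
  · intro r s r' s'
    have key : (e * r * (1 - e) + (1 - e) * s * e) * (e * r' * (1 - e) + (1 - e) * s' * e)
        = e * r * ((1 - e) * (1 - e)) * s' * e + (1 - e) * s * (e * e) * r' * (1 - e)
          + e * r * ((1 - e) * e) * r' * (1 - e) + (1 - e) * s * (e * (1 - e)) * s' * e := by
      noncomm_ring
    rw [key, he, hef, hfe, hff]
    simp [h1, h2]
  · intro a b a' b'
    exact ⟨a * e * a', b * (1 - e) * b', L3 a b a' b'⟩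
  · refine ⟨1, 1, ?_⟩
    rw [mul_one, mul_one, he, hff]
    noncomm_ring
  · rintro x y ⟨a, b, rfl⟩ ⟨c, d, rfl⟩
    constructor
    · rw [L3, L1, L1, L1]
      have : e * a * e * (e * c * e) = e * (a * (e * e) * c) * e := by noncomm_ring
      rw [this, he]
    · rw [L3, L2, L2, L2]
      have : (1 - e) * b * (1 - e) * ((1 - e) * d * (1 - e))
          = (1 - e) * (b * ((1 - e) * (1 - e)) * d) * (1 - e) := by noncomm_ring
      rw [this, hff]
  · rintro x y ⟨a, b, hx⟩ ⟨c, d, hy⟩ hxy1 hxy2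
    have hx' : x = e * x * e + (1 - e) * x * (1 - e) := by
      nth_rewrite 2 3 [hx]
      rw [L1, L2, hx]
    have hy' : y = e * y * e + (1 - e) * y * (1 - e) := by
      nth_rewrite 2 3 [hy]
      rw [L1, L2, hy]
    rw [hx', hxy1, hxy2, ← hy']
  · intro u v
    exact ⟨e * u * e + (1 - e) * v * (1 - e), ⟨u, v, rfl⟩, L1 u v, L2 u v⟩
end

section
/- Let R be a ring with identity and e an idempotent such that eR(1-e)Re ⊆ J(R) and (1-e)ReR(1-e) ⊆ J(R), where J(R) is the Jacobson radical (i.e., e is J-trivial). Then in the quotient ring R/J(R), the image of e is a central idempotent. -/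
/-- If `a * r * a ∈ J(⊥)` for all `r`, then `a ∈ J(⊥)`. -/
lemma mem_jacobson_of_mul_mem {R : Type*} [Ring R] (a : R)
    (h : ∀ r : R, a * r * a ∈ TwoSidedIdeal.jacobson (⊥ : TwoSidedIdeal R)) :
    a ∈ TwoSidedIdeal.jacobson (⊥ : TwoSidedIdeal R) := by
  have key : a ∈ TwoSidedIdeal.asIdeal (TwoSidedIdeal.jacobson (⊥ : TwoSidedIdeal R)) := by
    rw [TwoSidedIdeal.asIdeal_jacobson, ← Ideal.jacobson_idem, Ideal.mem_jacobson_iff]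
    intro y
    refine ⟨1 - y * a, ?_⟩
    have h' : -(y * (a * y * a)) ∈
        TwoSidedIdeal.asIdeal (TwoSidedIdeal.jacobson (⊥ : TwoSidedIdeal R)) := by
      exact neg_mem (Ideal.mul_mem_left _ y (h y))
    rw [TwoSidedIdeal.asIdeal_jacobson] at h'
    convert h' using 1
    noncomm_ring
  simpa using key
  
/-- If `e` is a J-trivial idempotent of `R`, i.e.
`eR(1-e)Re ⊆ J(R)` and `(1-e)ReR(1-e) ⊆ J(R)` where `J(R)` is the Jacobson
radical (the Jacobson radical of the zero two-sided ideal), then the image of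
`e` in `R/J(R)` is a central idempotent, i.e. `e*r - r*e ∈ J(R)` for all `r`
(and `e*e - e = 0 ∈ J(R)`). -/
theorem J_trivial_central_mod_jacobson {R : Type*} [Ring R]
    (e : R) (he : e * e = e)
    (h1 : ∀ r s : R, e * r * (1 - e) * s * e ∈
      TwoSidedIdeal.jacobson (⊥ : TwoSidedIdeal R))
    (h2 : ∀ r s : R, (1 - e) * r * e * s * (1 - e) ∈
      TwoSidedIdeal.jacobson (⊥ : TwoSidedIdeal R)) :
    ∀ r : R, e * r - r * e ∈ TwoSidedIdeal.jacobson (⊥ : TwoSidedIdeal R) := by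
  intro r
  set J := TwoSidedIdeal.jacobson (⊥ : TwoSidedIdeal R) with hJ
  have ha : e * r * (1 - e) ∈ J := by
    apply mem_jacobson_of_mul_mem
    intro s
    have := J.mul_mem_right _ (r * (1 - e)) (h1 r s)
    convert this using 1
    noncomm_ring
  have hb : (1 - e) * r * e ∈ J := by
    apply mem_jacobson_of_mul_mem
    intro s
    have := J.mul_mem_right _ (r * e) (h2 r s)
    convert this using 1
    noncomm_ring
  have : e * r - r * e = e * r * (1 - e) - (1 - e) * r * e := by noncomm_ring
  rw [this]
  exact J.sub_mem ha hb
end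

section
/- Let R be a ring with identity, e a nonzero inner Peirce trivial idempotent, and f a primitive idempotent of R. Then efe is either zero or a primitive idempotent of R. -/
/-- If `e` is a nonzero inner Peirce trivial idempotent and `f`
is a primitive idempotent of `R` (the only nonzero idempotent of `fRf` is `f`),
then `efe` is either zero or a primitive idempotent of `R`. -/
theorem inner_peirce_trivial_primitive {R : Type*} [Ring R]
    (e : R) (he : e * e = e) (hene : e ≠ 0)
    (hinner : ∀ r s : R, e * r * (1 - e) * s * e = 0)
    (f : R) (hf : f * f = f) (hfne : f ≠ 0)
    (hprim : ∀ g : R, g = f * g * f → g * g = g → g ≠ 0 → g = f) :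
    e * f * e = 0 ∨
    ((e * f * e) * (e * f * e) = e * f * e ∧ e * f * e ≠ 0 ∧
      ∀ g : R, g = (e * f * e) * g * (e * f * e) → g * g = g → g ≠ 0 → g = e * f * e) := by
  have key : ∀ x y : R, e * x * e * y * e = e * x * y * e := by
    intro x y
    have h0 := hinner x y
    have hexp : e * x * (1 - e) * y * e = e * x * y * e - e * x * e * y * e := by
      noncomm_ring
    rw [hexp] at h0
    exact (sub_eq_zero.mp h0).symm
  have key2 : ∀ x y : R, (e * x * e) * (e * y * e) = e * (x * y) * e := by
    intro x y
    have h1 : (e * x * e) * (e * y * e) = e * x * (e * e) * y * e := by noncomm_ring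
    rw [h1, he, key]
    noncomm_ring
  have hp2 : (e * f * e) * (e * f * e) = e * f * e := by
    rw [key2 f f, hf]
  by_cases h0 : e * f * e = 0
  · exact Or.inl h0
  refine Or.inr ⟨hp2, h0, ?_⟩
  intro g hg hgg hgne
  have hpe : (e * f * e) * e = e * f * e := by
    rw [mul_assoc (e * f) e e, he]
  have hep : e * (e * f * e) = e * f * e := by
    rw [← mul_assoc, ← mul_assoc, he]
  have hpg : (e * f * e) * g = g := by
    conv_lhs => rw [hg]
    rw [← mul_assoc (e * f * e) (e * f * e * g) (e * f * e),
      ← mul_assoc (e * f * e) (e * f * e) g, hp2, ← hg]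
  have hgp : g * (e * f * e) = g := by
    conv_lhs => rw [hg]
    rw [mul_assoc (e * f * e * g) (e * f * e) (e * f * e), hp2, ← hg]
  have hge : g * e = g := by
    calc g * e = g * (e * f * e) * e := by rw [hgp]
      _ = g * ((e * f * e) * e) := mul_assoc _ _ _
      _ = g * (e * f * e) := by rw [hpe]
      _ = g := hgp
  have heg : e * g = g := by
    calc e * g = e * ((e * f * e) * g) := by rw [hpg]
      _ = e * (e * f * e) * g := (mul_assoc _ _ _).symm
      _ = (e * f * e) * g := by rw [hep]
      _ = g := hpg
  have hege : e * g * e = g := by rw [heg, hge]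
  have hgpg : g * (e * f * e) * g = g := by rw [hgp, hgg]
  have h1 : g * (e * f * e) = g * f * e := by
    rw [← mul_assoc, ← mul_assoc, hge]
  have hgfg : g * f * g = g := by
    have h2 : g * f * e * g = g := by rw [← h1]; exact hgpg
    calc g * f * g = g * f * (e * g) := by rw [heg]
      _ = g * f * e * g := (mul_assoc _ _ _).symm
      _ = g := h2
  have hh2 : (f * g * f) * (f * g * f) = f * g * f := by
    have a1 : (f * g * f) * (f * g * f) = f * (g * f * g) * f := by
      have a0 : (f * g * f) * (f * g * f) = f * g * (f * f) * g * f := by noncomm_ring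
      rw [a0, hf]; noncomm_ring
    rw [a1, hgfg]
  have hhf : f * g * f = f * (f * g * f) * f := by
    have a0 : f * (f * g * f) * f = (f * f) * g * (f * f) := by noncomm_ring
    rw [a0, hf]
  have h5 : g * (f * g * f) * g = g := by
    have a : g * (f * g * f) * g = (g * f * g) * f * g := by noncomm_ring
    rw [a, hgfg, hgfg]
  have hhne : f * g * f ≠ 0 := by
    intro hz
    rw [hz] at h5
    apply hgne
    simpa using h5.symm
  have hfeq : f * g * f = f := hprim (f * g * f) hhf hh2 hhne
  calc g = (e * f * e) * g * (e * f * e) := hg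
    _ = (e * f * e) * (e * g * e) * (e * f * e) := by rw [hege]
    _ = (e * (f * g) * e) * (e * f * e) := by rw [key2 f g]
    _ = e * (f * g * f) * e := key2 (f * g) f
    _ = e * f * e := by rw [hfeq]
end
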